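/- arXiv:1606.09011 — 5 statements merged into one kernel-verified Lean document; each statement's English description precedes it below -/
import Mathlib

section
/- For the map C₋, there exists a fixed point whose differential has trace 2cos φ if and only if M₁² = -(4/27)·(M₂ + cos φ - 3)²·(2cos φ - M₂), i.e. M₁² = (4/27)·(M₂ + cos φ - 3)²·(M₂ - 2cos φ). -/
/-!
On the trace condition `3 y₀² = M₂ - 2 cos φ`, the fixed-point equation becomes linear in `y₀`:
`M₁ = -(2/3)(M₂ + cos φ - 3) y₀`. Squaring it and substituting `y₀²` gives the curve; conversely a
point of the curve yields `y₀ = M₁ / k` when the slope `k` is nonzero, and `y₀ = √(1 - cos φ)`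
(with `M₁ = 0`) when it vanishes.
-/

theorem fixedPoint_trace_iff {K : Type*} [Field K] [CharZero K] (M₁ M₂ c y : K) :
    (-y ^ 3 + (M₂ - 2) * y + M₁ = 0 ∧ M₂ - 3 * y ^ 2 = 2 * c) ↔
      (y ^ 2 = (M₂ - 2 * c) / 3 ∧ M₁ = -(2 / 3) * (M₂ + c - 3) * y) := by
  constructor
  · rintro ⟨hfix, htr⟩
    have hy2 : y ^ 2 = (M₂ - 2 * c) / 3 := by linear_combination -htr / 3
    exact ⟨hy2, by linear_combination hfix + y * hy2⟩
  · rintro ⟨hy2, hM₁⟩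
    exact ⟨by linear_combination hM₁ - y * hy2, by linear_combination -3 * hy2⟩

theorem Real.exists_sq_eq_and_eq_mul_iff {s k m : ℝ} (hs : k = 0 → 0 ≤ s) :
    (∃ y, y ^ 2 = s ∧ m = k * y) ↔ m ^ 2 = k ^ 2 * s := by
  constructor
  · rintro ⟨y, rfl, rfl⟩
    ring
  · intro h
    by_cases hk : k = 0
    · subst hk
      exact ⟨√s, Real.sq_sqrt (hs rfl), by simpa using h⟩
    · refine ⟨m / k, ?_, by field_simp⟩
      rw [div_pow, h]
      field_simp

theorem cubic_henon_minus_elliptic_curve_general (M₁ M₂ φ : ℝ) :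
    ((∃ y₀ : ℝ, -y₀ ^ 3 + (M₂ - 2) * y₀ + M₁ = 0 ∧
        M₂ - 3 * y₀ ^ 2 = 2 * Real.cos φ) ↔
      M₁ ^ 2 = -(4 / 27) * (M₂ + Real.cos φ - 3) ^ 2 * (2 * Real.cos φ - M₂)) ∧
    (-(4 / 27) * (M₂ + Real.cos φ - 3) ^ 2 * (2 * Real.cos φ - M₂)
      = 4 / 27 * (M₂ + Real.cos φ - 3) ^ 2 * (M₂ - 2 * Real.cos φ)) := by
  set c := Real.cos φ
  refine ⟨?_, by ring⟩
  -- when the slope vanishes, `M₂ - 2c = 3(1 - c) ≥ 0`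
  have hs : -(2 / 3) * (M₂ + c - 3) = 0 → 0 ≤ (M₂ - 2 * c) / 3 := fun hk => by
    linarith [Real.cos_le_one φ]
  simp only [fixedPoint_trace_iff, Real.exists_sq_eq_and_eq_mul_iff hs]
  constructor <;> intro h <;> linear_combination h

/-- `C₋` has a fixed point whose differential has trace `2 cos φ` iff
`M₁² = -(4/27)(M₂ + cos φ - 3)²(2 cos φ - M₂)`, i.e.
`M₁² = (4/27)(M₂ + cos φ - 3)²(M₂ - 2 cos φ)`. -/
theorem cubic_henon_minus_elliptic_curve (M₁ M₂ φ : ℝ) (h0 : 0 < φ) (hπ : φ < Real.pi) :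
    ((∃ y₀ : ℝ, -y₀ ^ 3 + (M₂ - 2) * y₀ + M₁ = 0 ∧
        M₂ - 3 * y₀ ^ 2 = 2 * Real.cos φ) ↔
      M₁ ^ 2 = -(4 / 27) * (M₂ + Real.cos φ - 3) ^ 2 * (2 * Real.cos φ - M₂)) ∧
    (-(4 / 27) * (M₂ + Real.cos φ - 3) ^ 2 * (2 * Real.cos φ - M₂)
      = 4 / 27 * (M₂ + Real.cos φ - 3) ^ 2 * (M₂ - 2 * Real.cos φ)) :=
  cubic_henon_minus_elliptic_curve_general M₁ M₂ φ
end

section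
/- The map C₋ has a fixed point with eigenvalues e^{±iπ/2} (i.e. the differential at the fixed point has trace 0 and determinant 1) if and only if M₁² = (4/27)·M₂·(M₂ - 3)². -/
/-! Vanishing trace forces `M₂ = 3y₀²`, and then the fixed-point equation reads
`M₁ = 2y₀(1 - y₀²)`. The curve `M₁² = (4/27)M₂(M₂ - 3)²` is exactly the image of
`y ↦ (2y(1 - y²), 3y²)`: on it `M₂ ≥ 0`, and `y = ±√(M₂/3)` recovers the parameter,
the sign being fixed by that of `M₁` since the first coordinate is odd in `y`. -/

lemma fixed_point_trace_zero_iff (M₁ M₂ y : ℝ) :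
    (-y ^ 3 + (M₂ - 2) * y + M₁ = 0 ∧ M₂ - 3 * y ^ 2 = 0) ↔
      M₁ = 2 * y * (1 - y ^ 2) ∧ M₂ = 3 * y ^ 2 := by
  constructor
  · rintro ⟨hfix, htrace⟩
    obtain rfl : M₂ = 3 * y ^ 2 := by linarith
    exact ⟨by linear_combination hfix, rfl⟩
  · rintro ⟨rfl, rfl⟩
    constructor <;> ring

lemma sq_eq_iff_exists_param (M₁ M₂ : ℝ) :
    M₁ ^ 2 = 4 / 27 * M₂ * (M₂ - 3) ^ 2 ↔
      ∃ y : ℝ, M₁ = 2 * y * (1 - y ^ 2) ∧ M₂ = 3 * y ^ 2 := by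
  constructor
  · intro h
    have hM₂ : 0 ≤ M₂ := by
      by_contra! hneg
      nlinarith [sq_nonneg M₁, mul_pos_of_neg_of_neg hneg hneg]
    set s := √(M₂ / 3)
    have hs : M₂ = 3 * s ^ 2 := by
      rw [Real.sq_sqrt (by positivity)]
      ring
    have hsq : M₁ ^ 2 = (2 * s * (1 - s ^ 2)) ^ 2 := by
      rw [h, hs]
      ring
    rcases sq_eq_sq_iff_eq_or_eq_neg.1 hsq with hpos | hneg
    · exact ⟨s, hpos, hs⟩
    · exact ⟨-s, by rw [hneg]; ring, by rw [hs]; ring⟩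
  · rintro ⟨y, rfl, rfl⟩
    ring

/-- `C₋` has a fixed point with eigenvalues `e^{±iπ/2}` (the differential at the
fixed point `(y₀,y₀)` has trace `M₂ - 3y₀² = 0` and determinant 1) iff
`M₁² = (4/27) M₂ (M₂-3)²`. -/
theorem cubic_henon_minus_res14_curve (M₁ M₂ : ℝ) :
    (∃ y₀ : ℝ, -y₀ ^ 3 + (M₂ - 2) * y₀ + M₁ = 0 ∧ M₂ - 3 * y₀ ^ 2 = 0) ↔
      M₁ ^ 2 = 4 / 27 * M₂ * (M₂ - 3) ^ 2 := by
  simp_rw [fixed_point_trace_zero_iff, sq_eq_iff_exists_param]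
end

section
/- Fix φ with 0 < φ < π and 1 + 4cos φ ≠ 0, and set M₂ = (6cos²φ + 3cos φ + 1)/(1 + 4cos φ). If -1/4 < cos φ < 1/6, then the value M₂ does not satisfy the constraint 2cos φ - M₂ > 0 required for a fixed point of C₊ with eigenvalues e^{±iφ}, so the fixed point E_φ of C₊ is always nondegenerate (B₁ ≠ 0) for -1/4 < cos φ < 1/6. -/
/-- Fix `φ` with `0 < φ < π`, `1 + 4 cos φ ≠ 0` and `-1/4 < cos φ < 1/6`, and set
`M₂ = (6cos²φ + 3cosφ + 1)/(1 + 4cosφ)` (the value of the parameter at which the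
first Birkhoff coefficient `B₁` of the elliptic fixed point `E_φ` of `C₊`
vanishes).  Then `M₂` does not satisfy the constraint `2cos φ - M₂ > 0` required
for a fixed point of `C₊` with eigenvalues `e^{±iφ}`; consequently any parameter
`M₂'` satisfying that constraint differs from `M₂`, i.e. the fixed point `E_φ`
of `C₊` is always nondegenerate (`B₁ ≠ 0`) for `-1/4 < cos φ < 1/6`. -/
theorem cubic_henon_plus_twist_nondegenerate (φ : ℝ) (h0 : 0 < φ) (hπ : φ < Real.pi)
    (hden : 1 + 4 * Real.cos φ ≠ 0)
    (hc1 : -1 / 4 < Real.cos φ) (hc2 : Real.cos φ < 1 / 6) :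
    let c := Real.cos φ
    let M₂ := (6 * c ^ 2 + 3 * c + 1) / (1 + 4 * c)
    ¬(2 * c - M₂ > 0) ∧ ∀ M₂' : ℝ, 2 * c - M₂' > 0 → M₂' ≠ M₂ := by
  intro c M₂
  have hpos : 0 < 1 + 4 * c := by simp only [c]; linarith
  have key : ¬(2 * c - M₂ > 0) := by
    have hM : 2 * c - M₂ = (2 * c + 1) * (c - 1) / (1 + 4 * c) := by
      simp only [M₂]; rw [eq_div_iff hpos.ne', sub_mul, div_mul_cancel₀ _ hpos.ne']; ring
    rw [hM]
    have hnum : (2 * c + 1) * (c - 1) < 0 := by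
      have h1 : 0 < 2 * c + 1 := by simp only [c]; linarith
      have h2 : c - 1 < 0 := by simp only [c]; linarith
      exact mul_neg_of_pos_of_neg h1 h2
    have := div_neg_of_neg_of_pos hnum hpos
    linarith
  exact ⟨key, fun M₂' h heq => key (heq ▸ h)⟩
end

section
/- The curves L₄^{1,2}: M₁ = ±(2/(3√3))(1 + M₂)^{3/2} (for M₂ > 1/3) are tangent to the curve L^-_{π/2}: M₁² = (4/27)M₂(M₂-3)² at the points (M₁, M₂) = (±16/27, 1/3): at M₂ = 1/3 the two curves meet, with equal values and equal first derivatives dM₁/dM₂, but different second derivatives (quadratic tangency). -/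
/-!
With `c = 2/(3√3)`, `f t = c (1+t)^{3/2}` and `g t = c √t (3-t)` one has
`f' t = (3c/2) √(1+t)` and `g' t = (3c/2)(1-t)/√t`, so at `t = 1/3` both curves pass through
`16/27` with slope `2/3`. The second derivatives cannot agree because they have opposite signs:
`f'' t = (3c/4)/√(1+t) > 0`, while `g'' t = -(3c/4)(1+t)/(t √t) < 0`.
-/

open Real Filter Topology

theorem iteratedDeriv_two_eq_of_hasDerivAt {𝕜 F : Type*} [NontriviallyNormedField 𝕜]
    [NormedAddCommGroup F] [NormedSpace 𝕜 F] {f f' : 𝕜 → F} {x : 𝕜} {f'' : F}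
    (hf : ∀ᶠ t in 𝓝 x, HasDerivAt f (f' t) t) (hf' : HasDerivAt f' f'' x) :
    iteratedDeriv 2 f x = f'' := by
  rw [iteratedDeriv_succ, iteratedDeriv_one]
  exact (EventuallyEq.deriv_eq (hf.mono fun _ ht => ht.deriv)).trans hf'.deriv

lemma Real.sqrt_pow_three {x : ℝ} (hx : 0 ≤ x) : √(x ^ 3) = x * √x := by
  rw [pow_succ, sqrt_mul (pow_nonneg hx 2), sqrt_sq hx]

lemma sqrt_one_third : √(1 / 3 : ℝ) = 1 / √3 := by
  rw [sqrt_div' _ (by norm_num : (0 : ℝ) ≤ 3), sqrt_one]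

lemma sqrt_four_thirds : √(1 + 1 / 3 : ℝ) = 2 / √3 := by
  rw [show (1 + 1 / 3 : ℝ) = 2 ^ 2 * (1 / 3) by norm_num, sqrt_mul (by norm_num),
    sqrt_sq (by norm_num), sqrt_one_third, mul_one_div]

section Derivatives

variable (c : ℝ) {t : ℝ}

lemma hasDerivAt_L4 (ht : -1 < t) :
    HasDerivAt (fun t => c * √((1 + t) ^ 3)) (3 / 2 * c * √(1 + t)) t := by
  have h1 : 0 < 1 + t := by linarith
  have hpow : HasDerivAt (fun t : ℝ => (1 + t) ^ 3) (3 * (1 + t) ^ 2) t := by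
    simpa using ((hasDerivAt_id t).const_add 1).fun_pow 3
  refine ((hpow.sqrt (by positivity)).const_mul c).congr_deriv ?_
  have hs : 0 < √(1 + t) := sqrt_pos.2 h1
  rw [sqrt_pow_three h1.le]
  field_simp
  rw [sq_sqrt h1.le]

lemma hasDerivAt_deriv_L4 (ht : -1 < t) :
    HasDerivAt (fun t => 3 / 2 * c * √(1 + t)) (3 / 4 * c / √(1 + t)) t := by
  have h1 : 0 < 1 + t := by linarith
  refine ((((hasDerivAt_id t).const_add 1).sqrt h1.ne').const_mul (3 / 2 * c)).congr_deriv ?_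
  simp only [id]
  field_simp
  ring

lemma hasDerivAt_Lpi2 (ht : 0 < t) :
    HasDerivAt (fun t => c * √t * (3 - t)) (3 / 2 * c * (1 - t) / √t) t := by
  refine (((hasDerivAt_sqrt ht.ne').const_mul c).mul
    ((hasDerivAt_id t).const_sub 3)).congr_deriv ?_
  simp only [id]
  have hs : 0 < √t := sqrt_pos.2 ht
  field_simp
  rw [sq_sqrt ht.le]
  ring

lemma hasDerivAt_deriv_Lpi2 (ht : 0 < t) :
    HasDerivAt (fun t => 3 / 2 * c * (1 - t) / √t) (-(3 / 4 * c * (1 + t) / (t * √t))) t := by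
  have hs : 0 < √t := sqrt_pos.2 ht
  refine ((((hasDerivAt_id t).const_sub 1).const_mul (3 / 2 * c)).div
    (hasDerivAt_sqrt ht.ne') hs.ne').congr_deriv ?_
  simp only [id]
  field_simp
  rw [sq_sqrt ht.le]
  ring

end Derivatives

/-- The curve `L₄¹ : M₁ = (2/(3√3))(1+M₂)^{3/2}` is quadratically tangent to the
branch `M₁ = (2/(3√3))√M₂ (3-M₂)` of `L⁻_{π/2}` at the point `(16/27, 1/3)`:
at `M₂ = 1/3` the two curves have equal values (both `16/27`) and equal first
derivatives, but different second derivatives. -/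
theorem tangency_L4_Lpi2 :
    let c : ℝ := 2 / (3 * Real.sqrt 3)
    let f : ℝ → ℝ := fun t => c * Real.sqrt ((1 + t) ^ 3)
    let g : ℝ → ℝ := fun t => c * Real.sqrt t * (3 - t)
    f (1 / 3) = 16 / 27 ∧ g (1 / 3) = 16 / 27 ∧
      deriv f (1 / 3) = deriv g (1 / 3) ∧
      iteratedDeriv 2 f (1 / 3) ≠ iteratedDeriv 2 g (1 / 3) := by
  intro c f g
  have h3 : √3 ^ 2 = 3 := sq_sqrt (by norm_num)
  refine ⟨?_, ?_, ?_, ?_⟩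
  · simp only [f, c, sqrt_pow_three (by norm_num : (0 : ℝ) ≤ 1 + 1 / 3), sqrt_four_thirds]
    field_simp
    rw [h3]; norm_num
  · simp only [g, c, sqrt_one_third]
    field_simp
    rw [h3]; norm_num
  · rw [(hasDerivAt_L4 c (by norm_num)).deriv, (hasDerivAt_Lpi2 c (by norm_num)).deriv,
      sqrt_four_thirds, sqrt_one_third]
    field_simp
    rw [h3]; ring
  · have hf2 := iteratedDeriv_two_eq_of_hasDerivAt
      (eventually_gt_nhds (by norm_num : (-1 : ℝ) < 1 / 3) |>.mono fun _ => hasDerivAt_L4 c)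
      (hasDerivAt_deriv_L4 c (by norm_num : (-1 : ℝ) < 1 / 3))
    have hg2 := iteratedDeriv_two_eq_of_hasDerivAt
      (eventually_gt_nhds (by norm_num : (0 : ℝ) < 1 / 3) |>.mono fun _ => hasDerivAt_Lpi2 c)
      (hasDerivAt_deriv_Lpi2 c (by norm_num : (0 : ℝ) < 1 / 3))
    rw [hf2, hg2]
    exact ((neg_neg_of_pos (by positivity)).trans (by positivity)).ne'
end

section
/- For the map C₊ at parameters (M₁,M₂) on the curve L⁻: M₁² = -(4/27)(2+M₂)(4-M₂)² (with M₂ ≤ -2 for real solutions since the right side must be nonnegative), there exists a fixed point (y₀,y₀) whose differential has trace -2 (double eigenvalue -1). Conversely, if a fixed point of C₊ has trace of differential equal to -2, then M₁² = -(4/27)(2+M₂)(4-M₂)². -/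
/-! On the trace condition `3 y₀² = -(2 + M₂)` the fixed-point cubic becomes linear in `y₀`,
namely `3 M₁ = 2 (4 - M₂) y₀`. Squaring it and substituting `y₀²` gives the curve `L⁻`;
conversely, on `L⁻` with `M₂ ≤ -2` the point `y₀ = 3 M₁ / (2 (4 - M₂))` satisfies both equations. -/

lemma fixed_point_cubic_eq_zero_iff {M₁ M₂ y : ℝ} (htr : M₂ + 3 * y ^ 2 = -2) :
    y ^ 3 + (M₂ - 2) * y + M₁ = 0 ↔ 3 * M₁ = 2 * (4 - M₂) * y := by
  have hcube : 3 * y ^ 3 = -(2 + M₂) * y := by linear_combination y * htr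
  constructor
  · intro h
    linear_combination 3 * h - hcube
  · intro h
    linear_combination (hcube + h) / 3

lemma trace_eq_neg_two_of_mem_curve {M₁ M₂ : ℝ} (hM₂ : M₂ ≠ 4)
    (hcurve : M₁ ^ 2 = -(4 / 27) * (2 + M₂) * (4 - M₂) ^ 2) :
    M₂ + 3 * (3 * M₁ / (2 * (4 - M₂))) ^ 2 = -2 := by
  have h4 : 4 - M₂ ≠ 0 := sub_ne_zero.mpr hM₂.symm
  field_simp
  linear_combination 27 * hcurve

lemma mem_curve_of_trace_eq_neg_two {M₁ M₂ y : ℝ} (hfix : y ^ 3 + (M₂ - 2) * y + M₁ = 0)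
    (htr : M₂ + 3 * y ^ 2 = -2) :
    M₁ ^ 2 = -(4 / 27) * (2 + M₂) * (4 - M₂) ^ 2 := by
  have hlin := (fixed_point_cubic_eq_zero_iff htr).mp hfix
  linear_combination (M₁ + 2 * (4 - M₂) * y / 3) / 3 * hlin + 4 * (4 - M₂) ^ 2 / 27 * htr

/-- For `C₊`: if `(M₁,M₂)` lies on the curve `L⁻ : M₁² = -(4/27)(2+M₂)(4-M₂)²`
with `M₂ ≤ -2`, then there is a fixed point `(y₀,y₀)` whose differential has
trace `-2` (double eigenvalue `-1`); conversely, if a fixed point of `C₊` has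
trace of the differential equal to `-2`, then `M₁² = -(4/27)(2+M₂)(4-M₂)²`. -/
theorem cubic_henon_plus_period_doubling_curve (M₁ M₂ : ℝ) :
    ((M₂ ≤ -2 ∧ M₁ ^ 2 = -(4 / 27) * (2 + M₂) * (4 - M₂) ^ 2) →
      ∃ y₀ : ℝ, y₀ ^ 3 + (M₂ - 2) * y₀ + M₁ = 0 ∧ M₂ + 3 * y₀ ^ 2 = -2) ∧
    ((∃ y₀ : ℝ, y₀ ^ 3 + (M₂ - 2) * y₀ + M₁ = 0 ∧ M₂ + 3 * y₀ ^ 2 = -2) →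
      M₁ ^ 2 = -(4 / 27) * (2 + M₂) * (4 - M₂) ^ 2) := by
  refine ⟨fun ⟨hM₂, hcurve⟩ => ?_, fun ⟨y₀, hfix, htr⟩ => mem_curve_of_trace_eq_neg_two hfix htr⟩
  have h4 : 4 - M₂ ≠ 0 := by linarith
  have htr := trace_eq_neg_two_of_mem_curve (by linarith) hcurve
  refine ⟨_, (fixed_point_cubic_eq_zero_iff htr).mpr ?_, htr⟩
  field_simp
end
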